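/- arXiv:2001.10247 — 2 statements merged into one kernel-verified Lean document; each statement's English description precedes it below -/
import Mathlib

section
/- Let G = AB be a finite group that is the product of subgroups A and B, and let A₀ ⊴ A and B₀ ⊴ B be normal subgroups. If A₀B₀ = B₀A₀ (i.e., A₀B₀ is a subgroup), then A₀^g B₀ = B₀ A₀^g for every g ∈ G. -/
open scoped Pointwise

theorem stmt_0 {G : Type*} [Group G] [Finite G] (A B A₀ B₀ : Subgroup G)
    (hAB : (A : Set G) * (B : Set G) = Set.univ)
    (hA₀A : A₀ ≤ A) (hB₀B : B₀ ≤ B)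
    (hA₀n : ∀ a ∈ A, ∀ x ∈ A₀, a * x * a⁻¹ ∈ A₀)
    (hB₀n : ∀ b ∈ B, ∀ x ∈ B₀, b * x * b⁻¹ ∈ B₀)
    (hperm : (A₀ : Set G) * (B₀ : Set G) = (B₀ : Set G) * (A₀ : Set G))
    (g : G) :
    ((fun x => g⁻¹ * x * g) '' (A₀ : Set G)) * (B₀ : Set G)
      = (B₀ : Set G) * ((fun x => g⁻¹ * x * g) '' (A₀ : Set G)) := by
  have hg : g ∈ (A : Set G) * (B : Set G) := by rw [hAB]; trivial
  obtain ⟨a, ha, b, hb, hab⟩ := hg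
  have conjA : (fun x => a⁻¹ * x * a) '' (A₀ : Set G) = A₀ := by
    ext x; constructor
    · rintro ⟨y, hy, rfl⟩
      have := hA₀n a⁻¹ (A.inv_mem ha) y hy
      simpa using this
    · intro hx
      exact ⟨a * x * a⁻¹, hA₀n a ha x hx, by group⟩
  have conjB : (fun x => b⁻¹ * x * b) '' (B₀ : Set G) = B₀ := by
    ext x; constructor
    · rintro ⟨y, hy, rfl⟩
      have := hB₀n b⁻¹ (B.inv_mem hb) y hy
      simpa using this
    · intro hx
      exact ⟨b * x * b⁻¹, hB₀n b hb x hx, by group⟩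
  have hdecomp : (fun x => g⁻¹ * x * g) '' (A₀ : Set G)
      = (fun x => b⁻¹ * x * b) '' (A₀ : Set G) := by
    conv_rhs => rw [← conjA, Set.image_image]
    subst hab
    simp only [mul_inv_rev]
    congr 1
    ext x
    group
  have hfun : (fun x => b⁻¹ * x * b) = ⇑(MulAut.conj b⁻¹) := by
    ext x; simp [MulAut.conj]
  have hmul : ∀ S T : Set G, (fun x => b⁻¹ * x * b) '' (S * T)
      = ((fun x => b⁻¹ * x * b) '' S) * ((fun x => b⁻¹ * x * b) '' T) := by
    intro S T
    rw [hfun, Set.image_mul]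
  rw [hdecomp]
  conv_lhs => rw [← conjB]
  conv_rhs => rw [← conjB]
  rw [← hmul, ← hmul, hperm]
end

section
/- Let π be a set of primes and G = AB a finite group which is a D_π-group (G has Hall π-subgroups, they are all conjugate, and every π-subgroup lies in one). If A and B each have Hall π-subgroups, then there exist Hall π-subgroups A_π of A and B_π of B such that the set product A_π B_π is a Hall π-subgroup of G. -/
open scoped Pointwise

/-- `n` is a π-number. -/
def IsPiNumber (π : Set ℕ) (n : ℕ) : Prop := ∀ p ∈ n.primeFactors, p ∈ π

/-- `n` is a π'-number. -/
def IsPiPrimeNumber (π : Set ℕ) (n : ℕ) : Prop := ∀ p ∈ n.primeFactors, p ∉ π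

/-- `H` is a Hall π-subgroup of `G`. -/
def IsHallPi {G : Type*} [Group G] (π : Set ℕ) (H : Subgroup G) : Prop :=
  IsPiNumber π (Nat.card H) ∧ IsPiPrimeNumber π H.index

/-- `H` is a Hall π-subgroup of the subgroup `K`. -/
def IsHallPiIn {G : Type*} [Group G] (π : Set ℕ) (H K : Subgroup G) : Prop :=
  H ≤ K ∧ IsPiNumber π (Nat.card H) ∧ IsPiPrimeNumber π (H.subgroupOf K).index

/-- `G` is a `D_π`-group: existence, conjugacy and dominance for Hall π-subgroups. -/
def IsDPi (G : Type*) [Group G] (π : Set ℕ) : Prop :=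
  (∃ H : Subgroup G, IsHallPi π H) ∧
  (∀ H K : Subgroup G, IsHallPi π H → IsHallPi π K →
    ∃ g : G, K = Subgroup.map (MulAut.conj g).toMonoidHom H) ∧
  (∀ H : Subgroup G, IsPiNumber π (Nat.card H) →
    ∃ K : Subgroup G, IsHallPi π K ∧ H ≤ K)

-- product formula
lemma prod_card {G : Type*} [Group G] [Finite G] (P Q : Subgroup G) :
    Nat.card ((P : Set G) * (Q : Set G) : Set G) * Nat.card (P ⊓ Q : Subgroup G)
      = Nat.card P * Nat.card Q := by
  classical
  have key : ∀ x : ((P : Set G) * (Q : Set G) : Set G),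
      ∃ pq : G × G, pq.1 ∈ P ∧ pq.2 ∈ Q ∧ pq.1 * pq.2 = (x : G) := by
    rintro ⟨x, hx⟩
    obtain ⟨p, hp, q, hq, h⟩ := Set.mem_mul.mp hx
    exact ⟨(p, q), hp, hq, h⟩
  choose s hs1 hs2 hs3 using key
  have hb : Function.Bijective
      (fun z : ((P : Set G) * (Q : Set G) : Set G) × ↥(P ⊓ Q) =>
        ((⟨(s z.1).1 * (z.2 : G), mul_mem (hs1 z.1) z.2.2.1⟩ : P),
         (⟨(z.2 : G)⁻¹ * (s z.1).2, mul_mem (inv_mem z.2.2.2) (hs2 z.1)⟩ : Q))) := by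
    constructor
    · rintro ⟨x, d⟩ ⟨x', d'⟩ h
      rw [Prod.ext_iff] at h
      obtain ⟨h1, h2⟩ := h
      rw [Subtype.ext_iff] at h1 h2
      simp only at h1 h2
      have hx : (x : G) = (x' : G) := by
        have := congrArg₂ (· * ·) h1 h2
        simpa [mul_assoc, hs3] using this
      have hxx : x = x' := Subtype.ext hx
      subst hxx
      have hd : (d : G) = (d' : G) := by
        exact mul_left_cancel h1
      exact Prod.ext rfl (Subtype.ext hd)
    · rintro ⟨⟨p, hp⟩, ⟨q, hq⟩⟩
      have hx : p * q ∈ (P : Set G) * (Q : Set G) := Set.mul_mem_mul hp hq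
      set x : ((P : Set G) * (Q : Set G) : Set G) := ⟨p * q, hx⟩ with hxdef
      have hpq : (s x).1 * (s x).2 = p * q := hs3 x
      have hdP : (s x).1⁻¹ * p ∈ P := mul_mem (inv_mem (hs1 x)) hp
      have hdQ : (s x).1⁻¹ * p ∈ Q := by
        have h2 : (s x).2 = (s x).1⁻¹ * (p * q) := by rw [← hpq]; group
        have : (s x).1⁻¹ * p = (s x).2 * q⁻¹ := by rw [h2]; group
        rw [this]
        exact mul_mem (hs2 x) (inv_mem hq)
      refine ⟨⟨x, ⟨(s x).1⁻¹ * p, ⟨hdP, hdQ⟩⟩⟩, ?_⟩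
      refine Prod.ext (Subtype.ext ?_) (Subtype.ext ?_)
      · simp [mul_assoc]
      · simp only [mul_inv_rev, inv_inv]
        rw [mul_assoc]
        have : (s x).2 = (s x).1⁻¹ * (p * q) := by rw [← hpq]; group
        rw [this]
        group
  have := Nat.card_eq_of_bijective _ hb
  rwa [Nat.card_prod, Nat.card_prod] at this


lemma aux_idx {G : Type*} [Group G] [Finite G] {H K : Subgroup G} (h : H ≤ K) :
    (H.subgroupOf K).index * Nat.card H = Nat.card K := by
  have h1 := Subgroup.card_mul_index (H.subgroupOf K)
  rwa [Nat.card_congr (Subgroup.subgroupOfEquivOfLe h).toEquiv, mul_comm] at h1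

lemma card_map_conj {G : Type*} [Group G] (x : G) (H : Subgroup G) :
    Nat.card (H.map (MulAut.conj x).toMonoidHom) = Nat.card H :=
  (Nat.card_congr (H.equivMapOfInjective _ (MulAut.conj x).injective).toEquiv).symm

lemma map_conj_self {G : Type*} [Group G] {A : Subgroup G} {x : G} (hx : x ∈ A) :
    A.map (MulAut.conj x).toMonoidHom = A := by
  apply le_antisymm
  · rintro y ⟨z, hz, rfl⟩
    simpa using mul_mem (mul_mem hx hz) (inv_mem hx)
  · intro y hy
    exact ⟨x⁻¹ * y * x, by simpa using mul_mem (mul_mem (inv_mem hx) hy) hx,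
      by simp [mul_assoc]⟩

lemma piNum_card_map_conj {G : Type*} [Group G] (π : Set ℕ) (x : G) {H : Subgroup G}
    (h : IsPiNumber π (Nat.card H)) :
    IsPiNumber π (Nat.card (H.map (MulAut.conj x).toMonoidHom)) := by
  rwa [card_map_conj]

lemma isHallPi_conj {G : Type*} [Group G] [Finite G] {π : Set ℕ} {H : Subgroup G}
    (hH : IsHallPi π H) (x : G) : IsHallPi π (H.map (MulAut.conj x).toMonoidHom) := by
  obtain ⟨h1, h2⟩ := hH
  refine ⟨by rwa [card_map_conj], ?_⟩
  have e1 := Subgroup.card_mul_index H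
  have e2 := Subgroup.card_mul_index (H.map (MulAut.conj x).toMonoidHom)
  rw [card_map_conj] at e2
  have hpos : 0 < Nat.card H := Nat.card_pos
  have : (H.map (MulAut.conj x).toMonoidHom).index = H.index :=
    Nat.eq_of_mul_eq_mul_left hpos (e2.trans e1.symm)
  rwa [this]

lemma isHallPiIn_conj {G : Type*} [Group G] [Finite G] {π : Set ℕ} {H A : Subgroup G}
    (hH : IsHallPiIn π H A) {x : G} (hx : x ∈ A) :
    IsHallPiIn π (H.map (MulAut.conj x).toMonoidHom) A := by
  obtain ⟨hle, h1, h2⟩ := hH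
  have hle' : H.map (MulAut.conj x).toMonoidHom ≤ A := by
    conv_rhs => rw [← map_conj_self hx]
    exact Subgroup.map_mono hle
  refine ⟨hle', by rwa [card_map_conj], ?_⟩
  have e1 := aux_idx hle
  have e2 := aux_idx hle'
  rw [card_map_conj] at e2
  have hpos : 0 < Nat.card H := Nat.card_pos
  have : ((H.map (MulAut.conj x).toMonoidHom).subgroupOf A).index = (H.subgroupOf A).index :=
    Nat.eq_of_mul_eq_mul_right hpos (e2.trans e1.symm)
  rwa [this]

lemma fact_pi {π : Set ℕ} {n p : ℕ} (h : IsPiNumber π n) (hp : p ∉ π) :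
    n.factorization p = 0 := by
  by_contra hc
  exact hp (h p (by rwa [← Nat.support_factorization, Finsupp.mem_support_iff]))

lemma fact_pi' {π : Set ℕ} {n p : ℕ} (h : IsPiPrimeNumber π n) (hp : p ∈ π) :
    n.factorization p = 0 := by
  by_contra hc
  exact h p (by rwa [← Nat.support_factorization, Finsupp.mem_support_iff]) hp


theorem stmt_2 {G : Type*} [Group G] [Finite G] (π : Set ℕ) (A B : Subgroup G)
    (hAB : (A : Set G) * (B : Set G) = Set.univ)
    (hD : IsDPi G π)
    (hA : ∃ H : Subgroup G, IsHallPiIn π H A)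
    (hB : ∃ H : Subgroup G, IsHallPiIn π H B) :
    ∃ Aπ Bπ : Subgroup G, IsHallPiIn π Aπ A ∧ IsHallPiIn π Bπ B ∧
      ∃ H : Subgroup G, IsHallPi π H ∧ (H : Set G) = (Aπ : Set G) * (Bπ : Set G) := by
  obtain ⟨Ap, hAp⟩ := hA
  obtain ⟨Bp, hBp⟩ := hB
  obtain ⟨-, hconj, hdom⟩ := hD
  obtain ⟨H1, hH1, hAp1⟩ := hdom Ap hAp.2.1
  obtain ⟨H2, hH2, hBp2⟩ := hdom Bp hBp.2.1
  obtain ⟨g, hg⟩ := hconj H1 H2 hH1 hH2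
  have hginv : g⁻¹ ∈ (A : Set G) * (B : Set G) := by rw [hAB]; trivial
  obtain ⟨a, ha, b, hb, hab⟩ := Set.mem_mul.mp hginv
  -- b * g = a⁻¹
  have hbg : b * g = a⁻¹ := by
    have : g = b⁻¹ * a⁻¹ := by rw [← mul_inv_rev, hab, inv_inv]
    rw [this]; group
  set Aπ := Ap.map (MulAut.conj a⁻¹).toMonoidHom with hAπ
  set Bπ := Bp.map (MulAut.conj b).toMonoidHom with hBπ
  set H' := H1.map (MulAut.conj a⁻¹).toMonoidHom with hH'
  have hAπA : IsHallPiIn π Aπ A := isHallPiIn_conj hAp (inv_mem ha)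
  have hBπB : IsHallPiIn π Bπ B := isHallPiIn_conj hBp hb
  have hH'hall : IsHallPi π H' := isHallPi_conj hH1 a⁻¹
  have hAπH : Aπ ≤ H' := Subgroup.map_mono hAp1
  have hBπH : Bπ ≤ H' := by
    have h1 : Bπ ≤ H2.map (MulAut.conj b).toMonoidHom := Subgroup.map_mono hBp2
    rw [hg, Subgroup.map_map] at h1
    have h2 : (MulAut.conj b).toMonoidHom.comp (MulAut.conj g).toMonoidHom
        = (MulAut.conj a⁻¹).toMonoidHom := by
      ext y
      simp [← hbg, mul_assoc]
    rwa [h2] at h1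
  refine ⟨Aπ, Bπ, hAπA, hBπB, H', hH'hall, ?_⟩
  -- counting
  have hsub : (Aπ : Set G) * (Bπ : Set G) ⊆ (H' : Set G) := by
    rw [Set.mul_subset_iff]
    intro x hx y hy
    exact mul_mem (hAπH hx) (hBπH hy)
  have hm := prod_card Aπ Bπ
  set m := Nat.card ((Aπ : Set G) * (Bπ : Set G) : Set G) with hmdef
  set d := Nat.card (Aπ ⊓ Bπ : Subgroup G) with hddef
  -- |A||B| = |G| * |A ⊓ B|
  have hGf := prod_card A B
  rw [hAB] at hGf
  rw [Nat.card_univ] at hGf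
  -- hGf : Nat.card G * d0 = Nat.card A * Nat.card B  (d0 = card (A ⊓ B))
  have hABle : Aπ ⊓ Bπ ≤ A ⊓ B := inf_le_inf hAπA.1 hBπB.1
  have hdvdAB : d ∣ Nat.card (A ⊓ B : Subgroup G) := Subgroup.card_dvd_of_le hABle
  have hdA : d ∣ Nat.card Aπ := Subgroup.card_dvd_of_le inf_le_left
  have hd0 : d ≠ 0 := Nat.card_pos.ne'
  have hh0 : Nat.card H' ≠ 0 := Nat.card_pos.ne'
  have ha0 : Nat.card Aπ ≠ 0 := Nat.card_pos.ne'
  have hb0 : Nat.card Bπ ≠ 0 := Nat.card_pos.ne'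
  have hdvd : d * Nat.card H' ∣ Nat.card Aπ * Nat.card Bπ := by
    rw [← Nat.factorization_le_iff_dvd (Nat.mul_ne_zero hd0 hh0) (Nat.mul_ne_zero ha0 hb0)]
    rw [Nat.factorization_mul hd0 hh0, Nat.factorization_mul ha0 hb0]
    intro p
    simp only [Finsupp.coe_add, Pi.add_apply]
    by_cases hp : p ∈ π
    · -- ν H' = ν G, ν Aπ = ν A, ν Bπ = ν B
      have hH'G : (Nat.card H').factorization p = (Nat.card G).factorization p := by
        have e := congrArg Nat.factorization (Subgroup.card_mul_index H')
        rw [Nat.factorization_mul hh0 Subgroup.index_ne_zero_of_finite] at e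
        have e3 := DFunLike.congr_fun e p
        simpa [fact_pi' hH'hall.2 hp] using e3
      have hAπA' : (Nat.card Aπ).factorization p = (Nat.card A).factorization p := by
        have e := congrArg Nat.factorization (aux_idx hAπA.1)
        rw [Nat.factorization_mul Subgroup.index_ne_zero_of_finite ha0] at e
        have e3 := DFunLike.congr_fun e p
        simpa [fact_pi' hAπA.2.2 hp] using e3
      have hBπB' : (Nat.card Bπ).factorization p = (Nat.card B).factorization p := by
        have e := congrArg Nat.factorization (aux_idx hBπB.1)
        rw [Nat.factorization_mul Subgroup.index_ne_zero_of_finite hb0] at e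
        have e3 := DFunLike.congr_fun e p
        simpa [fact_pi' hBπB.2.2 hp] using e3
      have hABn0 : Nat.card (A ⊓ B : Subgroup G) ≠ 0 := Nat.card_pos.ne'
      have hGn0 : Nat.card G ≠ 0 := Nat.card_pos.ne'
      have hdle : d.factorization p ≤ (Nat.card (A ⊓ B : Subgroup G)).factorization p :=
        (Nat.factorization_le_iff_dvd hd0 hABn0).mpr hdvdAB p
      have hsum : (Nat.card G).factorization p
            + (Nat.card (A ⊓ B : Subgroup G)).factorization p
          = (Nat.card A).factorization p + (Nat.card B).factorization p := by
        have e := congrArg Nat.factorization hGf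
        rw [Nat.factorization_mul hGn0 hABn0,
          Nat.factorization_mul Nat.card_pos.ne' Nat.card_pos.ne'] at e
        simpa using DFunLike.congr_fun e p
      rw [hH'G, hAπA', hBπB']
      omega
    · have h1 : (Nat.card H').factorization p = 0 := fact_pi hH'hall.1 hp
      have h2 : d.factorization p ≤ (Nat.card Aπ).factorization p :=
        (Nat.factorization_le_iff_dvd hd0 ha0).mpr hdA p
      omega
  -- conclude: card H' ≤ m
  have hm0 : m ≠ 0 := by
    intro h0
    rw [h0, zero_mul] at hm
    exact (Nat.mul_ne_zero ha0 hb0) hm.symm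
  have hdvd' : Nat.card H' ∣ m := by
    have : d * Nat.card H' ∣ d * m := by rw [← hm, mul_comm m d] at hdvd; exact hdvd
    exact (mul_dvd_mul_iff_left (by exact_mod_cast hd0 : (d : ℕ) ≠ 0)).mp this
  have hle : Nat.card H' ≤ m := Nat.le_of_dvd (Nat.pos_of_ne_zero hm0) hdvd'
  have hcoe : Nat.card (H' : Set G) = Nat.card H' := rfl
  have := Set.eq_of_subset_of_ncard_le hsub
    (by rw [← Nat.card_coe_set_eq, ← Nat.card_coe_set_eq, hcoe]; exact hle)
    (Set.toFinite _)
  exact this.symm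
end
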